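/- Let (X, D) be an F-metric space with associated pair (f, α), and let d be the associated metric on X. Then the following are equivalent: (i) X is F-complete and F-totally bounded; (ii) X is F-compact; (iii) X is compact with respect to the metric d; (iv) X is complete and totally bounded with respect to the metric d. -/

import Mathlib

open Filter Topology

universe u v

/-- `(X, D)` is an `F`-metric space with associated pair `(f, α)`:
`f` is non-decreasing on `(0, ∞)` (F1), `f(tₙ) → -∞` iff `tₙ → 0` for positive
sequences (F2), `α ≥ 0`, `D` is nonnegative and satisfies (D1), (D2), (D3). -/
structure IsFMetric {X : Type v} (D : X → X → ℝ) (f : ℝ → ℝ) (α : ℝ) : Prop where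
  nonneg : ∀ x y : X, 0 ≤ D x y
  alpha_nonneg : 0 ≤ α
  f_mono : ∀ s t : ℝ, 0 < s → s < t → f s ≤ f t
  f_tendsto : ∀ t : ℕ → ℝ, (∀ n, 0 < t n) →
      (Tendsto t atTop (nhds 0) ↔ Tendsto (fun n => f (t n)) atTop atBot)
  eq_iff : ∀ x y : X, D x y = 0 ↔ x = y
  symm : ∀ x y : X, D x y = D y x
  ineq : ∀ x y : X, ∀ N : ℕ, 2 ≤ N → ∀ u : ℕ → X, u 0 = x → u (N - 1) = y →
      0 < D x y →
      f (D x y) ≤ f (∑ i ∈ Finset.range (N - 1), D (u i) (u (i + 1))) + α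

/-- The associated metric `d(x,y) = inf { Σ_{i<N-1} D(uᵢ, uᵢ₊₁) : N ≥ 2, u₀ = x, u_{N-1} = y }`. -/
noncomputable def assocDist {X : Type v} (D : X → X → ℝ) (x y : X) : ℝ :=
  sInf { s : ℝ | ∃ N : ℕ, 2 ≤ N ∧ ∃ u : ℕ → X, u 0 = x ∧ u (N - 1) = y ∧
    s = ∑ i ∈ Finset.range (N - 1), D (u i) (u (i + 1)) }

/-- The ball `B_ρ(x, ε) = { y : ρ(x,y) < ε }` for a distance-like function `ρ`. -/
def ballWrt {X : Type v} (ρ : X → X → ℝ) (x : X) (ε : ℝ) : Set X := { y | ρ x y < ε }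

/-- `U` is open w.r.t. `ρ`: every point of `U` has a `ρ`-ball around it inside `U`. -/
def IsOpenWrt {X : Type v} (ρ : X → X → ℝ) (U : Set X) : Prop :=
  ∀ x ∈ U, ∃ ε > 0, ballWrt ρ x ε ⊆ U

/-- `C` is closed w.r.t. `ρ`: its complement is open w.r.t. `ρ`. -/
def IsClosedWrt {X : Type v} (ρ : X → X → ℝ) (C : Set X) : Prop := IsOpenWrt ρ Cᶜ

/-- A sequence is Cauchy w.r.t. `ρ`: `ρ(xₙ, xₘ) → 0` as `n, m → ∞`. -/
def IsCauchyWrt {X : Type v} (ρ : X → X → ℝ) (x : ℕ → X) : Prop :=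
  ∀ ε > 0, ∃ N : ℕ, ∀ m, N ≤ m → ∀ n, N ≤ n → ρ (x m) (x n) < ε

/-- A sequence converges to `l` w.r.t. `ρ`: `ρ(xₙ, l) → 0` as `n → ∞`. -/
def ConvergesWrt {X : Type v} (ρ : X → X → ℝ) (x : ℕ → X) (l : X) : Prop :=
  Tendsto (fun n => ρ (x n) l) atTop (nhds 0)

/-- `X` is complete w.r.t. `ρ`: every Cauchy sequence converges. -/
def IsCompleteWrt {X : Type v} (ρ : X → X → ℝ) : Prop :=
  ∀ x : ℕ → X, IsCauchyWrt ρ x → ∃ l : X, ConvergesWrt ρ x l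

/-- The diameter of `A` w.r.t. `ρ`: `sup { ρ(x,y) : x, y ∈ A }`. -/
noncomputable def diamWrt {X : Type v} (ρ : X → X → ℝ) (A : Set X) : ℝ :=
  sSup { r : ℝ | ∃ x ∈ A, ∃ y ∈ A, r = ρ x y }

/-- `A` is bounded w.r.t. `ρ`: there is `M > 0` with `ρ(x,y) ≤ M` for all `x, y ∈ A`. -/
def IsBoundedWrt {X : Type v} (ρ : X → X → ℝ) (A : Set X) : Prop :=
  ∃ M > 0, ∀ x ∈ A, ∀ y ∈ A, ρ x y ≤ M

/-- `A` is totally bounded w.r.t. `ρ`: for every `ε > 0` finitely many `ρ`-balls of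
radius `ε` centered at points of `A` cover `A`. -/
def IsTotallyBoundedWrt {X : Type v} (ρ : X → X → ℝ) (A : Set X) : Prop :=
  ∀ ε > 0, ∃ t : Finset X, ↑t ⊆ A ∧ A ⊆ ⋃ a ∈ t, ballWrt ρ a ε

/-- `A` is compact w.r.t. `ρ`: every cover of `A` by `ρ`-open sets admits a finite subcover. -/
def IsCompactWrt {X : Type v} (ρ : X → X → ℝ) (A : Set X) : Prop :=
  ∀ 𝒰 : Set (Set X), (∀ U ∈ 𝒰, IsOpenWrt ρ U) → A ⊆ ⋃₀ 𝒰 →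
    ∃ 𝒱 ⊆ 𝒰, 𝒱.Finite ∧ A ⊆ ⋃₀ 𝒱

/-!
The associated metric satisfies `d ≤ D`. Conversely `D` is uniformly small where `d` is: a chain
from `x` to `y` with small sum `s` has `f s` very negative by (F2), while (D3) gives
`f (D x y) ≤ f s + α`. Hence `D` and `d` have the same open sets, Cauchy sequences, limits and
ε-nets up to a change of ε, which turns (i) into (iv) and (ii) into (iii); and (iii) ⟺ (iv) is
the characterisation of compact metric spaces.
-/

section Comparison

variable {X : Type*} {ρ σ : X → X → ℝ}

def UniformlyControlledBy (ρ σ : X → X → ℝ) : Prop :=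
  ∀ ε > 0, ∃ δ > 0, ∀ x y, σ x y < δ → ρ x y < ε

theorem UniformlyControlledBy.of_le (h : ∀ x y, ρ x y ≤ σ x y) : UniformlyControlledBy ρ σ :=
  fun ε hε => ⟨ε, hε, fun x y hxy => (h x y).trans_lt hxy⟩

theorem IsOpenWrt.of_uniformlyControlledBy (h : UniformlyControlledBy ρ σ) {U : Set X}
    (hU : IsOpenWrt ρ U) : IsOpenWrt σ U := by
  intro x hx
  obtain ⟨ε, hε, hball⟩ := hU x hx
  obtain ⟨δ, hδ, hsmall⟩ := h ε hε
  exact ⟨δ, hδ, fun y hy => hball (hsmall x y hy)⟩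

theorem IsCompactWrt.of_uniformlyControlledBy (h : UniformlyControlledBy ρ σ) {A : Set X}
    (hA : IsCompactWrt σ A) : IsCompactWrt ρ A :=
  fun 𝒰 h𝒰 hcover => hA 𝒰 (fun U hU => (h𝒰 U hU).of_uniformlyControlledBy h) hcover

theorem IsCauchyWrt.of_uniformlyControlledBy (h : UniformlyControlledBy ρ σ) {x : ℕ → X}
    (hx : IsCauchyWrt σ x) : IsCauchyWrt ρ x := by
  intro ε hε
  obtain ⟨δ, hδ, hsmall⟩ := h ε hε
  obtain ⟨N, hN⟩ := hx δ hδ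
  exact ⟨N, fun m hm n hn => hsmall _ _ (hN m hm n hn)⟩

theorem ConvergesWrt.of_uniformlyControlledBy (h : UniformlyControlledBy ρ σ)
    (hρ : ∀ x y, 0 ≤ ρ x y) {x : ℕ → X} {l : X} (hx : ConvergesWrt σ x l) :
    ConvergesWrt ρ x l := by
  refine tendsto_order.2 ⟨fun a ha => .of_forall fun n => ha.trans_le (hρ _ _), fun ε hε => ?_⟩
  obtain ⟨δ, hδ, hsmall⟩ := h ε hε
  exact (hx.eventually (gt_mem_nhds hδ)).mono fun n hn => hsmall _ _ hn

theorem IsCompleteWrt.of_uniformlyControlledBy (hρσ : UniformlyControlledBy ρ σ)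
    (hσρ : UniformlyControlledBy σ ρ) (hρ : ∀ x y, 0 ≤ ρ x y) (hσ : IsCompleteWrt σ) :
    IsCompleteWrt ρ := fun x hx =>
  let ⟨l, hl⟩ := hσ x (hx.of_uniformlyControlledBy hσρ)
  ⟨l, hl.of_uniformlyControlledBy hρσ hρ⟩

theorem IsTotallyBoundedWrt.of_uniformlyControlledBy (h : UniformlyControlledBy ρ σ)
    {A : Set X} (hA : IsTotallyBoundedWrt σ A) : IsTotallyBoundedWrt ρ A := by
  intro ε hε
  obtain ⟨δ, hδ, hsmall⟩ := h ε hε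
  obtain ⟨t, htA, hcover⟩ := hA δ hδ
  exact ⟨t, htA, hcover.trans (Set.iUnion₂_mono fun a _ y hy => hsmall a y hy)⟩

end Comparison

section PseudoMetric

variable {X : Type*} [PseudoMetricSpace X]

theorem ballWrt_dist (x : X) (ε : ℝ) : ballWrt dist x ε = Metric.ball x ε := by
  ext y
  simp [ballWrt, dist_comm]

theorem isOpenWrt_dist_iff {U : Set X} : IsOpenWrt dist U ↔ IsOpen U := by
  simp only [Metric.isOpen_iff, IsOpenWrt, ballWrt_dist]

theorem isCompactWrt_dist_iff {A : Set X} : IsCompactWrt dist A ↔ IsCompact A := by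
  refine ⟨fun h => isCompact_generateFrom (TopologicalSpace.generateFrom_setOfPred_isOpen _).symm fun 𝒰 h𝒰 hcover =>
    h 𝒰 (fun U hU => isOpenWrt_dist_iff.2 (h𝒰 hU)) hcover, fun h 𝒰 h𝒰 hcover => ?_⟩
  rw [Set.sUnion_eq_biUnion] at hcover
  obtain ⟨𝒱, h𝒱, hfin, hcover'⟩ := h.elim_finite_subcover_image (c := id)
    (fun U hU => isOpenWrt_dist_iff.1 (h𝒰 U hU)) hcover
  exact ⟨𝒱, h𝒱, hfin, by rwa [Set.sUnion_eq_biUnion]⟩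

theorem isCompleteWrt_dist_iff : IsCompleteWrt (dist : X → X → ℝ) ↔ CompleteSpace X := by
  simp only [IsCompleteWrt, IsCauchyWrt, ConvergesWrt, ← Metric.cauchySeq_iff,
    ← tendsto_iff_dist_tendsto_zero]
  exact ⟨fun h => UniformSpace.complete_of_cauchySeq_tendsto h, fun _ _ => cauchySeq_tendsto_of_complete⟩

theorem isTotallyBoundedWrt_dist_iff {A : Set X} :
    IsTotallyBoundedWrt dist A ↔ TotallyBounded A := by
  simp only [IsTotallyBoundedWrt, ballWrt_dist]
  refine ⟨fun h => Metric.totallyBounded_iff.2 fun ε hε => ?_, fun h ε hε => ?_⟩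
  · obtain ⟨t, -, hcover⟩ := h ε hε
    exact ⟨t, t.finite_toSet, hcover⟩
  · obtain ⟨t, htA, hfin, hcover⟩ := Metric.finite_approx_of_totallyBounded h ε hε
    exact ⟨hfin.toFinset, by simpa using htA, by simpa using hcover⟩

end PseudoMetric

section ChainSums

variable {X : Type*} {D : X → X → ℝ} {x y z : X} {s t : ℝ}

def chainSums (D : X → X → ℝ) (x y : X) : Set ℝ :=
  {s | ∃ n : ℕ, ∃ u : ℕ → X, u 0 = x ∧ u (n + 1) = y ∧
    s = ∑ i ∈ Finset.range (n + 1), D (u i) (u (i + 1))}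

theorem assocDist_eq_sInf_chainSums (D : X → X → ℝ) (x y : X) :
    assocDist D x y = sInf (chainSums D x y) := by
  refine congrArg sInf (Set.ext fun s => ⟨?_, ?_⟩)
  · rintro ⟨N, hN, u, hu0, huN, rfl⟩
    obtain ⟨n, rfl⟩ : ∃ n, N = n + 2 := ⟨N - 2, by omega⟩
    exact ⟨n, u, hu0, huN, rfl⟩
  · rintro ⟨n, u, hu0, hun, rfl⟩
    exact ⟨n + 2, by omega, u, hu0, hun, rfl⟩

theorem self_mem_chainSums (D : X → X → ℝ) (x y : X) : D x y ∈ chainSums D x y :=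
  ⟨0, fun i => if i = 0 then x else y, by simp, by simp, by simp⟩

theorem nonneg_of_mem_chainSums (hD : ∀ x y, 0 ≤ D x y) (hs : s ∈ chainSums D x y) : 0 ≤ s := by
  obtain ⟨n, u, -, -, rfl⟩ := hs
  exact Finset.sum_nonneg fun i _ => hD _ _

theorem bddBelow_chainSums (hD : ∀ x y, 0 ≤ D x y) : BddBelow (chainSums D x y) :=
  ⟨0, fun _ hs => nonneg_of_mem_chainSums hD hs⟩

theorem pos_of_mem_chainSums (hD : ∀ x y, 0 ≤ D x y) (hD₀ : ∀ x y, D x y = 0 → x = y)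
    (hxy : x ≠ y) (hs : s ∈ chainSums D x y) : 0 < s := by
  obtain ⟨n, u, hu0, hun, rfl⟩ := hs
  refine (Finset.sum_nonneg fun i _ => hD _ _).lt_of_ne fun hzero => hxy ?_
  have hstep := (Finset.sum_eq_zero_iff_of_nonneg fun i _ => hD _ _).1 hzero.symm
  have hconst : ∀ k ≤ n + 1, u k = x := by
    intro k hk
    induction k with
    | zero => exact hu0
    | succ k ih => exact (hD₀ _ _ (hstep k (Finset.mem_range.2 hk))).symm.trans (ih (by omega))
  rw [← hun, hconst (n + 1) le_rfl]

theorem mem_chainSums_symm (hD : ∀ x y, D x y = D y x) (hs : s ∈ chainSums D x y) :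
    s ∈ chainSums D y x := by
  obtain ⟨n, u, hu0, hun, rfl⟩ := hs
  refine ⟨n, fun i => u (n + 1 - i), by simpa using hun, by simpa using hu0, ?_⟩
  rw [← Finset.sum_range_reflect]
  refine Finset.sum_congr rfl fun i hi => ?_
  have hi := Finset.mem_range.1 hi
  dsimp only
  rw [show n + 1 - (i + 1) = n - i by omega, show n + 1 - i = n - i + 1 by omega,
    show n + 1 - 1 - i = n - i by omega, hD]

theorem add_mem_chainSums (hs : s ∈ chainSums D x y) (ht : t ∈ chainSums D y z) :
    s + t ∈ chainSums D x z := by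
  obtain ⟨a, u, hu0, hua, rfl⟩ := hs
  obtain ⟨b, v, hv0, hvb, rfl⟩ := ht
  set w : ℕ → X := fun i => if i ≤ a then u i else v (i - (a + 1))
  have hwu : ∀ i ≤ a + 1, w i = u i := by
    intro i hi
    rcases hi.lt_or_eq with hi | rfl
    · simp [w, Nat.le_of_lt_succ hi]
    · simp [w, hv0, hua]
  have hwv : ∀ i, w (a + 1 + i) = v i := fun i => by
    simp only [w, if_neg (show ¬a + 1 + i ≤ a by omega), Nat.add_sub_cancel_left]
  have hab : a + b + 1 + 1 = (a + 1) + (b + 1) := by omega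
  refine ⟨a + b + 1, w, by simp [w, hu0], by rw [hab, hwv, hvb], ?_⟩
  rw [hab, Finset.sum_range_add (fun i => D (w i) (w (i + 1))) (a + 1) (b + 1)]
  congr 1
  · exact Finset.sum_congr rfl fun i hi => by
      rw [hwu i (by simp at hi; omega), hwu (i + 1) (by simp at hi; omega)]
  · exact Finset.sum_congr rfl fun i _ => by rw [add_assoc (a + 1) i 1, hwv, hwv]

theorem assocDist_nonneg (hD : ∀ x y, 0 ≤ D x y) : 0 ≤ assocDist D x y := by
  rw [assocDist_eq_sInf_chainSums]
  exact Real.sInf_nonneg fun _ hs => nonneg_of_mem_chainSums hD hs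

theorem assocDist_le (hD : ∀ x y, 0 ≤ D x y) (x y : X) : assocDist D x y ≤ D x y := by
  rw [assocDist_eq_sInf_chainSums]
  exact csInf_le (bddBelow_chainSums hD) (self_mem_chainSums D x y)

theorem assocDist_comm (hD : ∀ x y, D x y = D y x) (x y : X) :
    assocDist D x y = assocDist D y x := by
  simp only [assocDist_eq_sInf_chainSums]
  exact congrArg sInf (Set.ext fun _ => ⟨mem_chainSums_symm hD, mem_chainSums_symm hD⟩)

theorem assocDist_triangle (hD : ∀ x y, 0 ≤ D x y) (x y z : X) :
    assocDist D x z ≤ assocDist D x y + assocDist D y z := by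
  simp only [assocDist_eq_sInf_chainSums]
  have hsub : ∀ s ∈ chainSums D x y, sInf (chainSums D x z) - s ≤ sInf (chainSums D y z) :=
    fun s hs => le_csInf ⟨_, self_mem_chainSums D y z⟩ fun t ht =>
      sub_le_iff_le_add'.2 (csInf_le (bddBelow_chainSums hD) (add_mem_chainSums hs ht))
  have : sInf (chainSums D x z) - sInf (chainSums D y z) ≤ sInf (chainSums D x y) :=
    le_csInf ⟨_, self_mem_chainSums D x y⟩ fun s hs => by linarith [hsub s hs]
  linarith

end ChainSums

namespace IsFMetric

variable {X : Type*} {D : X → X → ℝ} {f : ℝ → ℝ} {α : ℝ}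

theorem f_le (hD : IsFMetric D f α) {s t : ℝ} (hs : 0 < s) (hst : s ≤ t) : f s ≤ f t :=
  hst.eq_or_lt.elim (fun h => h ▸ le_rfl) (hD.f_mono s t hs)

theorem exists_pos_f_le (hD : IsFMetric D f α) (M : ℝ) : ∃ δ > 0, f δ ≤ M := by
  have hf : Tendsto (fun n : ℕ => f (1 / (n + 1))) atTop atBot :=
    (hD.f_tendsto _ fun n => by positivity).1 tendsto_one_div_add_atTop_nhds_zero_nat
  obtain ⟨n, hn⟩ := (hf.eventually (eventually_le_atBot M)).exists
  exact ⟨1 / (n + 1), by positivity, hn⟩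

theorem f_le_add_of_mem_chainSums (hD : IsFMetric D f α) {x y : X} {s : ℝ} (hxy : 0 < D x y)
    (hs : s ∈ chainSums D x y) : f (D x y) ≤ f s + α := by
  obtain ⟨n, u, hu0, hun, rfl⟩ := hs
  exact hD.ineq x y (n + 2) (by omega) u hu0 hun hxy

theorem uniformlyControlledBy_assocDist (hD : IsFMetric D f α) :
    UniformlyControlledBy D (assocDist D) := by
  intro ε hε
  obtain ⟨δ, hδ, hfδ⟩ := hD.exists_pos_f_le (f ε - α - 1)
  refine ⟨δ, hδ, fun x y hxy => ?_⟩
  by_contra! hεD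
  have hDpos : 0 < D x y := hε.trans_le hεD
  have hne : x ≠ y := fun h => hDpos.ne' ((hD.eq_iff x y).2 h)
  rw [assocDist_eq_sInf_chainSums] at hxy
  obtain ⟨s, hs, hsδ⟩ := exists_lt_of_csInf_lt ⟨_, self_mem_chainSums D x y⟩ hxy
  have hspos : 0 < s := pos_of_mem_chainSums hD.nonneg (fun a b => (hD.eq_iff a b).1) hne hs
  have : f ε ≤ f δ + α := calc
    f ε ≤ f (D x y) := hD.f_le hε hεD
    _ ≤ f s + α := hD.f_le_add_of_mem_chainSums hDpos hs
    _ ≤ f δ + α := by gcongr; exact hD.f_le hspos hsδ.le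
  linarith

theorem eq_of_assocDist_eq_zero (hD : IsFMetric D f α) {x y : X} (h : assocDist D x y = 0) :
    x = y := by
  by_contra hne
  have hDpos : 0 < D x y := (hD.nonneg x y).lt_of_ne fun h' => hne ((hD.eq_iff x y).1 h'.symm)
  obtain ⟨δ, hδ, hsmall⟩ := hD.uniformlyControlledBy_assocDist _ hDpos
  exact (hsmall x y (h ▸ hδ)).false

theorem assocDist_self (hD : IsFMetric D f α) (x : X) : assocDist D x x = 0 :=
  le_antisymm ((assocDist_le hD.nonneg x x).trans ((hD.eq_iff x x).2 rfl).le)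
    (assocDist_nonneg hD.nonneg)

@[reducible]
protected noncomputable def metricSpace (hD : IsFMetric D f α) : MetricSpace X where
  dist := assocDist D
  dist_self := hD.assocDist_self
  dist_comm := assocDist_comm hD.symm
  dist_triangle := assocDist_triangle hD.nonneg
  eq_of_dist_eq_zero := hD.eq_of_assocDist_eq_zero

end IsFMetric

theorem fCompact_tfae_general {X : Type v} (D : X → X → ℝ)
    (f : ℝ → ℝ) (α : ℝ) (hD : IsFMetric D f α) :
    [IsCompleteWrt D ∧ IsTotallyBoundedWrt D (Set.univ : Set X),
     IsCompactWrt D (Set.univ : Set X),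
     IsCompactWrt (assocDist D) (Set.univ : Set X),
     IsCompleteWrt (assocDist D) ∧
       IsTotallyBoundedWrt (assocDist D) (Set.univ : Set X)].TFAE := by
  let _ := hD.metricSpace
  have hdist : dist = assocDist D := rfl
  have hDd : UniformlyControlledBy D (assocDist D) := hD.uniformlyControlledBy_assocDist
  have hdD : UniformlyControlledBy (assocDist D) D := .of_le (assocDist_le hD.nonneg)
  tfae_have 1 ↔ 4 := and_congr
    ⟨.of_uniformlyControlledBy hdD hDd fun _ _ => assocDist_nonneg hD.nonneg,
      .of_uniformlyControlledBy hDd hdD hD.nonneg⟩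
    ⟨.of_uniformlyControlledBy hdD, .of_uniformlyControlledBy hDd⟩
  tfae_have 2 ↔ 3 := ⟨.of_uniformlyControlledBy hdD, .of_uniformlyControlledBy hDd⟩
  tfae_have 3 ↔ 4 := by
    rw [← hdist, isCompactWrt_dist_iff, isCompleteWrt_dist_iff, isTotallyBoundedWrt_dist_iff,
      isCompact_iff_totallyBounded_isComplete, completeSpace_iff_isComplete_univ, and_comm]
  tfae_finish

/-- the following are equivalent: (i) `X` is `F`-complete and
`F`-totally bounded; (ii) `X` is `F`-compact; (iii) `X` is compact w.r.t. the
associated metric `d`; (iv) `X` is complete and totally bounded w.r.t. `d`. -/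
theorem fCompact_tfae {X : Type v} [Nonempty X] (D : X → X → ℝ)
    (f : ℝ → ℝ) (α : ℝ) (hD : IsFMetric D f α) :
    [IsCompleteWrt D ∧ IsTotallyBoundedWrt D (Set.univ : Set X),
     IsCompactWrt D (Set.univ : Set X),
     IsCompactWrt (assocDist D) (Set.univ : Set X),
     IsCompleteWrt (assocDist D) ∧
       IsTotallyBoundedWrt (assocDist D) (Set.univ : Set X)].TFAE :=
  fCompact_tfae_general D f α hD
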